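/- Let γ: x → y be a path in a graph X. Then there exist n ≥ 0, a simple path δ: x → y, and simple loops σ₁, …, σₙ, all with supp(c_δ) ⊆ supp(c_γ) and supp(c_{σᵢ}) ⊆ supp(c_γ), such that c_γ = c_δ + c_{σ₁} + ⋯ + c_{σₙ}. -/

import Mathlib

/-- A graph in the sense of Sunada's topological crystallography: a set of vertices,
a set of edges, source and target maps, and a fixed-point free involution sending
each edge to its inverse. -/
structure SunadaGraph where
  V : Type
  E : Type
  s : E → V
  t : E → V
  inv : E → E
  s_inv : ∀ e, s (inv e) = t e
  t_inv : ∀ e, t (inv e) = s e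
  inv_inv : ∀ e, inv (inv e) = e
  inv_ne : ∀ e, inv e ≠ e

namespace SunadaGraph

variable (X : SunadaGraph)

/-- `X.IsPath x y γ` : the word of edges `γ` is a path from `x` to `y` in `X`. -/
inductive IsPath : X.V → X.V → List X.E → Prop
  | nil (x : X.V) : IsPath x x []
  | cons (e : X.E) {y : X.V} {γ : List X.E} (h : IsPath (X.t e) y γ) :
      IsPath (X.s e) y (e :: γ)

/-- A graph is connected if any two vertices are joined by a path. -/
def Connected : Prop := ∀ x y : X.V, ∃ γ : List X.E, X.IsPath x y γ

/-- An edge is a bridge if there is no path from its target to its source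
avoiding both the edge and its inverse. -/
def IsBridge (e : X.E) : Prop :=
  ¬ ∃ γ : List X.E, X.IsPath (X.t e) (X.s e) γ ∧ e ∉ γ ∧ X.inv e ∉ γ

/-- The space `C₁(X,ℝ)` of real 1-chains: formal linear combinations of edges
with `e⁻¹ = -e`, realized as finitely supported functions `c : E → ℝ` with
`c(e⁻¹) = - c(e)`. -/
noncomputable def C1 : Submodule ℝ (X.E →₀ ℝ) where
  carrier := {c | ∀ e, c (X.inv e) = - c e}
  add_mem' := by
    intro a b ha hb e
    simp only [Finsupp.add_apply, ha e, hb e]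
    ring
  zero_mem' := by intro e; simp
  smul_mem' := by
    intro r c hc e
    simp only [Finsupp.smul_apply, hc e, smul_eq_mul]
    ring

/-- The 1-chain associated to a single edge. -/
noncomputable def edgeChain (e : X.E) : ↥X.C1 :=
  ⟨Finsupp.single e 1 - Finsupp.single (X.inv e) 1, by
    intro f
    classical
    have h1 : (e = X.inv f) ↔ (X.inv e = f) := by
      constructor
      · rintro rfl; exact X.inv_inv f
      · rintro rfl; exact (X.inv_inv e).symm
    have h2 : (X.inv e = X.inv f) ↔ (e = f) := by
      constructor
      · intro h
        have := congrArg X.inv h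
        rwa [X.inv_inv, X.inv_inv] at this
      · rintro rfl; rfl
    simp only [Finsupp.sub_apply, Finsupp.single_apply, h1, h2]
    ring⟩

/-- The 1-chain `c_γ` of a path `γ`. -/
noncomputable def pathChain (γ : List X.E) : ↥X.C1 := (γ.map X.edgeChain).sum

/-- The inner product on `C₁(X,ℝ)` for which the edges form an orthonormal basis
(with `e⁻¹` counting as the negative of `e`). -/
noncomputable def chainInner (c d : ↥X.C1) : ℝ :=
  (1/2) * ((c : X.E →₀ ℝ).sum fun e x => x * (d : X.E →₀ ℝ) e)

/-- The boundary of a 1-chain. -/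
noncomputable def boundary (c : ↥X.C1) : X.V →₀ ℝ :=
  (c : X.E →₀ ℝ).sum fun e x => x • (Finsupp.single (X.t e) (1:ℝ) - Finsupp.single (X.s e) 1)

/-- A 1-cycle is a 1-chain with vanishing boundary. -/
def IsCycle (c : ↥X.C1) : Prop := X.boundary c = 0

/-- An integral 1-chain: all coefficients are integers. -/
def IsIntegral (c : ↥X.C1) : Prop := ∀ e, ∃ n : ℤ, (c : X.E →₀ ℝ) e = (n : ℝ)

/-- The support of a 1-chain: the set of edges with positive coefficient. -/
def chainSupp (c : ↥X.C1) : Set X.E := {e | 0 < (c : X.E →₀ ℝ) e}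

/-- `p` is the orthogonal projection of `C₁(X,ℝ)` onto the space `Z₁(X,ℝ)` of 1-cycles:
it takes values in `Z₁(X,ℝ)` and `c - p c` is orthogonal to every 1-cycle. -/
def IsOrthoProj (p : ↥X.C1 → ↥X.C1) : Prop :=
  (∀ c, X.IsCycle (p c)) ∧ (∀ c z, X.IsCycle z → X.chainInner (c - p c) z = 0)

/-- Two paths from `x` to `y` are homologous if one can be obtained from the other
by repeatedly inserting or deleting subwords `e e⁻¹`, and/or replacing a subword
`στ` by `τσ` where `σ` and `τ` are loops based at the same vertex. -/
inductive Homologous : X.V → X.V → List X.E → List X.E → Prop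
  | refl {x y : X.V} (γ : List X.E) (h : X.IsPath x y γ) : Homologous x y γ γ
  | cancel {x y : X.V} (γ δ : List X.E) (e : X.E)
      (h : X.IsPath x y (γ ++ e :: X.inv e :: δ)) (h' : X.IsPath x y (γ ++ δ)) :
      Homologous x y (γ ++ e :: X.inv e :: δ) (γ ++ δ)
  | swap {x y : X.V} (γ σ τ δ : List X.E) (v : X.V)
      (hσ : X.IsPath v v σ) (hτ : X.IsPath v v τ)
      (h : X.IsPath x y (γ ++ (σ ++ (τ ++ δ))))
      (h' : X.IsPath x y (γ ++ (τ ++ (σ ++ δ)))) :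
      Homologous x y (γ ++ (σ ++ (τ ++ δ))) (γ ++ (τ ++ (σ ++ δ)))
  | symm {x y : X.V} {a b : List X.E} (h : Homologous x y a b) : Homologous x y b a
  | trans {x y : X.V} {a b c : List X.E} (h1 : Homologous x y a b)
      (h2 : Homologous x y b c) : Homologous x y a c

/-- A simple path: no vertex is visited twice. -/
def IsSimplePath (x y : X.V) (γ : List X.E) : Prop :=
  X.IsPath x y γ ∧ (x :: γ.map X.t).Nodup

/-- A simple loop based at `x`: a loop in which every vertex other than `x` occurs
at most once and `x` occurs only as the initial and final vertex. -/
def IsSimpleLoop (x : X.V) (γ : List X.E) : Prop :=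
  X.IsPath x x γ ∧ (x :: (γ.map X.t).dropLast).Nodup

/-- A reduced word: no subword of the form `e e⁻¹`. -/
def Reduced (γ : List X.E) : Prop := γ.Chain' (fun a b => b ≠ X.inv a)

/-- A spanning tree: a set of edges, closed under inversion, such that the spanning
subgraph it determines is connected and has no nonempty reduced loops. -/
def IsSpanningTree (S : Set X.E) : Prop :=
  (∀ e ∈ S, X.inv e ∈ S) ∧
  (∀ x y : X.V, ∃ γ : List X.E, X.IsPath x y γ ∧ ∀ e ∈ γ, e ∈ S) ∧
  (∀ (x : X.V) (γ : List X.E), X.IsPath x x γ → (∀ e ∈ γ, e ∈ S) → X.Reduced γ → γ = [])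

/-- The quotient of a set of 1-chains by the translation action of the
integral 1-cycles. -/
def transQuot (S : Set ↥X.C1) : Type :=
  Quot (fun a b : S => ∃ z : ↥X.C1, X.IsCycle z ∧ X.IsIntegral z ∧ (b : ↥X.C1) = (a : ↥X.C1) + z)

end SunadaGraph

/-! Loop erasure (prepending the edges one at a time and cutting off a simple loop whenever the
new source already lies on the current simple path) splits any path into a simple path and simple
loops made of its edges. If no edge of `γ` occurs in it together with its inverse, all these edges
lie in `supp c_γ`. Otherwise `γ = α g μ g⁻¹ β` with `μ` a loop and `c_γ = c_{αβ} + c_μ`: if `μ`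
meets `αβ` in a vertex, splicing `μ` into `αβ` there gives a shorter path with the same chain; if
not, `c_{αβ}` and `c_μ` have disjoint supports and their decompositions can simply be combined. -/

namespace SunadaGraph

variable {X : SunadaGraph}

def vertices (X : SunadaGraph) (x : X.V) (γ : List X.E) : List X.V := x :: γ.map X.t

theorem vertices_append (x : X.V) (a b : List X.E) :
    X.vertices x (a ++ b) = X.vertices x a ++ b.map X.t := by
  simp [vertices]

section Paths

variable {x y w : X.V} {e : X.E} {γ : List X.E}

theorem isPath_nil_iff : X.IsPath x y [] ↔ x = y := by
  constructor
  · rintro ⟨⟩; rfl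
  · rintro rfl; exact .nil x

theorem isPath_cons_iff : X.IsPath x y (e :: γ) ↔ x = X.s e ∧ X.IsPath (X.t e) y γ := by
  constructor
  · rintro ⟨⟩; exact ⟨rfl, by assumption⟩
  · rintro ⟨rfl, h⟩; exact .cons e h

theorem isPath_append {a b : List X.E} :
    X.IsPath x y (a ++ b) ↔ ∃ z, X.IsPath x z a ∧ X.IsPath z y b := by
  induction a generalizing x with
  | nil => simp [isPath_nil_iff]
  | cons e a ih => simp [isPath_cons_iff, ih, and_assoc]

theorem IsPath.getLast_vertices (h : X.IsPath x y γ) :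
    (X.vertices x γ).getLast (List.cons_ne_nil _ _) = y := by
  induction h with
  | nil => rfl
  | cons e h ih => rw [← ih]; exact List.getLast_cons _

theorem IsPath.mem_vertices (h : X.IsPath x y γ) : y ∈ X.vertices x γ :=
  h.getLast_vertices ▸ List.getLast_mem _

theorem IsPath.source_mem_vertices (h : X.IsPath x y γ) (he : e ∈ γ) :
    X.s e ∈ X.vertices x γ := by
  induction h with
  | nil => simp at he
  | cons f h ih =>
    rcases List.mem_cons.1 he with rfl | he
    · exact List.mem_cons_self
    · exact List.mem_cons_of_mem _ (ih he)

theorem IsPath.exists_eq_append_of_mem_vertices (h : X.IsPath x y γ)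
    (hw : w ∈ X.vertices x γ) :
    ∃ γ₁ γ₂, γ = γ₁ ++ γ₂ ∧ X.IsPath x w γ₁ ∧ X.IsPath w y γ₂ := by
  induction h with
  | nil x =>
    obtain rfl : w = x := List.mem_singleton.1 hw
    exact ⟨[], [], rfl, .nil w, .nil w⟩
  | cons f h ih =>
    rcases List.mem_cons.1 hw with rfl | hw
    · exact ⟨[], _, rfl, .nil _, .cons f h⟩
    · obtain ⟨γ₁, γ₂, rfl, h₁, h₂⟩ := ih hw
      exact ⟨f :: γ₁, γ₂, rfl, .cons f h₁, h₂⟩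

theorem IsPath.cancel {α μ β : List X.E} {g : X.E}
    (h : X.IsPath x y (α ++ g :: μ ++ X.inv g :: β)) :
    X.IsPath x y (α ++ β) ∧ X.IsPath (X.t g) (X.t g) μ := by
  obtain ⟨z, h₁, h₂⟩ := isPath_append.1 h
  obtain ⟨rfl, hβ⟩ := isPath_cons_iff.1 h₂
  obtain ⟨z', hα, h₁⟩ := isPath_append.1 h₁
  obtain ⟨rfl, hμ⟩ := isPath_cons_iff.1 h₁
  rw [X.s_inv] at hμ
  rw [X.t_inv] at hβ
  exact ⟨isPath_append.2 ⟨_, hα, hβ⟩, hμ⟩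

theorem exists_eq_append_cons_append_inv_cons {f : X.E} (hf : f ∈ γ)
    (hf' : X.inv f ∈ γ) : ∃ g α μ β, γ = α ++ g :: μ ++ X.inv g :: β := by
  obtain ⟨α, β, rfl⟩ := List.append_of_mem hf
  rcases List.mem_append.1 hf' with hα | hβ
  · obtain ⟨α', μ, rfl⟩ := List.append_of_mem hα
    exact ⟨X.inv f, α', μ, β, by simp [X.inv_inv]⟩
  · rcases List.mem_cons.1 hβ with h | hβ
    · exact absurd h (X.inv_ne f)
    · obtain ⟨μ, β', rfl⟩ := List.append_of_mem hβ
      exact ⟨f, α, μ, β', by simp⟩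

end Paths

section Chains

variable {x y u v : X.V} {e : X.E} {γ : List X.E}

theorem pathChain_cons (e : X.E) (γ : List X.E) :
    X.pathChain (e :: γ) = X.edgeChain e + X.pathChain γ := by
  simp [pathChain]

theorem pathChain_append (a b : List X.E) :
    X.pathChain (a ++ b) = X.pathChain a + X.pathChain b := by
  simp [pathChain]

theorem edgeChain_inv (e : X.E) : X.edgeChain (X.inv e) = - X.edgeChain e := by
  ext1
  simp only [edgeChain, X.inv_inv, Submodule.coe_neg, neg_sub]

theorem inv_eq_iff_eq_inv {e f : X.E} : X.inv e = f ↔ e = X.inv f := by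
  constructor <;> rintro rfl <;> simp [X.inv_inv]

theorem pathChain_apply [DecidableEq X.E] (γ : List X.E) (e : X.E) :
    (X.pathChain γ : X.E →₀ ℝ) e = γ.count e - γ.count (X.inv e) := by
  induction γ with
  | nil => simp [pathChain]
  | cons f γ ih =>
    rw [pathChain_cons, Submodule.coe_add, Finsupp.add_apply, ih]
    simp only [edgeChain, Finsupp.sub_apply, Finsupp.single_apply, inv_eq_iff_eq_inv,
      List.count_cons, beq_iff_eq]
    push_cast
    ring

theorem mem_of_mem_chainSupp (he : e ∈ X.chainSupp (X.pathChain γ)) : e ∈ γ := by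
  classical
  have hpos : (0 : ℝ) < γ.count e - γ.count (X.inv e) := pathChain_apply γ e ▸ he
  have hcount : (0 : ℝ) < γ.count e := by
    linarith [(Nat.cast_nonneg _ : (0 : ℝ) ≤ γ.count (X.inv e))]
  exact List.count_pos_iff.1 (by exact_mod_cast hcount)

theorem mem_chainSupp_of_mem (he : e ∈ γ) (hinv : X.inv e ∉ γ) :
    e ∈ X.chainSupp (X.pathChain γ) := by
  classical
  show 0 < (X.pathChain γ : X.E →₀ ℝ) e
  rw [pathChain_apply, List.count_eq_zero_of_not_mem hinv]
  simpa using List.count_pos_iff.2 he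

theorem IsPath.pathChain_apply_eq_zero (h : X.IsPath x y γ) (he : X.s e ∉ X.vertices x γ) :
    (X.pathChain γ : X.E →₀ ℝ) e = 0 := by
  classical
  have hmem : e ∉ γ := fun he' => he (h.source_mem_vertices he')
  have hinv : X.inv e ∉ γ := fun he' => he <| List.mem_cons_of_mem x <| by
    simpa only [X.t_inv] using List.mem_map_of_mem (f := X.t) he'
  simp [pathChain_apply, List.count_eq_zero_of_not_mem, hmem, hinv]

theorem chainSupp_subset_add_of_disjoint {a b : List X.E} (ha : X.IsPath x y a)
    (hb : X.IsPath u v b) (hdisj : (X.vertices x a).Disjoint (X.vertices u b)) :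
    X.chainSupp (X.pathChain a) ⊆ X.chainSupp (X.pathChain a + X.pathChain b) := by
  intro e he
  have hb0 := hb.pathChain_apply_eq_zero fun hs =>
    hdisj (ha.source_mem_vertices (mem_of_mem_chainSupp he)) hs
  show 0 < ((X.pathChain a + X.pathChain b : X.C1) : X.E →₀ ℝ) e
  rw [Submodule.coe_add, Finsupp.add_apply, hb0, add_zero]
  exact he

theorem chainSupp_subset_of_subset {σ : List X.E} (hσ : σ ⊆ γ) (hγ : ∀ e ∈ γ, X.inv e ∉ γ) :
    X.chainSupp (X.pathChain σ) ⊆ X.chainSupp (X.pathChain γ) := fun e he =>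
  have heγ := hσ (mem_of_mem_chainSupp he)
  mem_chainSupp_of_mem heγ (hγ e heγ)

theorem pathChain_cancel (α μ β : List X.E) (g : X.E) :
    X.pathChain (α ++ g :: μ ++ X.inv g :: β) = X.pathChain (α ++ β) + X.pathChain μ := by
  simp only [pathChain_append, pathChain_cons, edgeChain_inv]
  abel

end Chains

section SimplePaths

variable {x y w : X.V} {e : X.E} {γ δ : List X.E}

theorem IsSimplePath.cons (h : X.IsSimplePath (X.t e) y δ) (he : X.s e ∉ X.vertices (X.t e) δ) :
    X.IsSimplePath (X.s e) y (e :: δ) :=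
  ⟨.cons e h.1, List.nodup_cons.2 ⟨he, h.2⟩⟩

theorem IsSimplePath.exists_eq_append_of_mem_vertices (h : X.IsSimplePath x y δ)
    (hw : w ∈ X.vertices x δ) :
    ∃ δ₁ δ₂, δ = δ₁ ++ δ₂ ∧ X.IsSimplePath x w δ₁ ∧ X.IsSimplePath w y δ₂ := by
  obtain ⟨δ₁, δ₂, rfl, h₁, h₂⟩ := h.1.exists_eq_append_of_mem_vertices hw
  have hnd := h.2
  rw [show x :: (δ₁ ++ δ₂).map X.t = X.vertices x δ₁ ++ δ₂.map X.t from
    vertices_append x δ₁ δ₂, List.nodup_append] at hnd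
  refine ⟨δ₁, δ₂, rfl, ⟨h₁, hnd.1⟩, h₂, List.nodup_cons.2 ⟨?_, hnd.2.1⟩⟩
  exact fun hw' => hnd.2.2 w h₁.mem_vertices w hw' rfl

theorem IsSimplePath.eq_nil_of_loop (h : X.IsSimplePath x x δ) : δ = [] := by
  cases δ with
  | nil => rfl
  | cons e δ =>
    have hlast := h.1.getLast_vertices
    simp only [vertices, List.map_cons, List.getLast_cons_cons] at hlast
    exact absurd (hlast ▸ List.getLast_mem _) (List.nodup_cons.1 h.2).1

theorem IsSimplePath.cons_isSimpleLoop (h : X.IsSimplePath (X.t e) (X.s e) δ) :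
    X.IsSimpleLoop (X.s e) (e :: δ) := by
  refine ⟨.cons e h.1, ?_⟩
  have hnd : (X.vertices (X.t e) δ).Nodup := h.2
  rw [← List.dropLast_append_getLast (l := X.vertices _ _) (List.cons_ne_nil _ _),
    h.1.getLast_vertices, List.nodup_append] at hnd
  exact List.nodup_cons.2 ⟨fun hs => hnd.2.2 _ hs _ (List.mem_singleton_self _) rfl, hnd.1⟩

theorem IsPath.exists_simplePath_simpleLoops (h : X.IsPath x y γ) :
    ∃ (δ : List X.E) (L : List (List X.E)), X.IsSimplePath x y δ ∧
      (∀ σ ∈ L, ∃ v, X.IsSimpleLoop v σ) ∧ δ ⊆ γ ∧ (∀ σ ∈ L, σ ⊆ γ) ∧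
      X.pathChain γ = X.pathChain δ + (L.map X.pathChain).sum := by
  induction h with
  | nil x =>
    exact ⟨[], [], ⟨.nil x, List.nodup_singleton x⟩, by simp, by simp, by simp, (add_zero _).symm⟩
  | cons e h ih =>
    obtain ⟨δ, L, hδ, hL, hδγ, hLγ, hc⟩ := ih
    have hLγ' : ∀ σ ∈ L, σ ⊆ e :: _ := fun σ hσ f hf => List.mem_cons_of_mem _ (hLγ σ hσ hf)
    by_cases hs : X.s e ∈ X.vertices (X.t e) δ
    · obtain ⟨δ₁, δ₂, rfl, hδ₁, hδ₂⟩ := hδ.exists_eq_append_of_mem_vertices hs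
      refine ⟨δ₂, (e :: δ₁) :: L, hδ₂, List.forall_mem_cons.2 ⟨⟨_, hδ₁.cons_isSimpleLoop⟩, hL⟩,
        fun f hf => List.mem_cons_of_mem _ (hδγ (List.mem_append_right _ hf)),
        List.forall_mem_cons.2 ⟨List.cons_subset_cons _ fun f hf =>
          hδγ (List.mem_append_left _ hf), hLγ'⟩, ?_⟩
      rw [pathChain_cons, hc, List.map_cons, List.sum_cons, pathChain_append, pathChain_cons]
      abel
    · exact ⟨e :: δ, L, hδ.cons hs, hL, List.cons_subset_cons _ hδγ, hLγ',
        by rw [pathChain_cons, pathChain_cons, hc, add_assoc]⟩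

end SimplePaths

section Decomposition

variable {x y v w : X.V} {γ : List X.E}

theorem IsPath.exists_splice {ρ μ : List X.E} (hρ : X.IsPath x y ρ) (hμ : X.IsPath v v μ)
    (hwρ : w ∈ X.vertices x ρ) (hwμ : w ∈ X.vertices v μ) :
    ∃ ρ', X.IsPath x y ρ' ∧ ρ'.length = ρ.length + μ.length ∧
      X.pathChain ρ' = X.pathChain ρ + X.pathChain μ := by
  obtain ⟨ρ₁, ρ₂, rfl, hρ₁, hρ₂⟩ := hρ.exists_eq_append_of_mem_vertices hwρ
  obtain ⟨μ₁, μ₂, rfl, hμ₁, hμ₂⟩ := hμ.exists_eq_append_of_mem_vertices hwμ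
  refine ⟨ρ₁ ++ (μ₂ ++ (μ₁ ++ ρ₂)), ?_, ?_, ?_⟩
  · exact isPath_append.2 ⟨w, hρ₁, isPath_append.2 ⟨v, hμ₂, isPath_append.2 ⟨w, hμ₁, hρ₂⟩⟩⟩
  · simp only [List.length_append]
    omega
  · simp only [pathChain_append]
    abel

structure IsConformalDecomp (X : SunadaGraph) (x y : X.V) (c : X.C1) (δ : List X.E)
    (L : List (List X.E)) : Prop where
  isSimplePath : X.IsSimplePath x y δ
  isSimpleLoop : ∀ σ ∈ L, ∃ v, X.IsSimpleLoop v σ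
  chainSupp_path : X.chainSupp (X.pathChain δ) ⊆ X.chainSupp c
  chainSupp_loop : ∀ σ ∈ L, X.chainSupp (X.pathChain σ) ⊆ X.chainSupp c
  eq_add : c = X.pathChain δ + (L.map X.pathChain).sum

theorem IsConformalDecomp.add {a b : X.C1} {δ : List X.E} {L L' : List (List X.E)}
    (ha : X.IsConformalDecomp x y a δ L) (hb : X.IsConformalDecomp v v b [] L')
    (hsa : X.chainSupp a ⊆ X.chainSupp (a + b)) (hsb : X.chainSupp b ⊆ X.chainSupp (a + b)) :
    X.IsConformalDecomp x y (a + b) δ (L ++ L') where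
  isSimplePath := ha.isSimplePath
  isSimpleLoop σ hσ := (List.mem_append.1 hσ).elim (ha.isSimpleLoop σ) (hb.isSimpleLoop σ)
  chainSupp_path := ha.chainSupp_path.trans hsa
  chainSupp_loop σ hσ := (List.mem_append.1 hσ).elim
    (fun h => (ha.chainSupp_loop σ h).trans hsa) (fun h => (hb.chainSupp_loop σ h).trans hsb)
  eq_add := by
    conv_lhs => rw [ha.eq_add, hb.eq_add]
    simp only [List.map_append, List.sum_append, pathChain, List.map_nil, List.sum_nil]
    abel

theorem IsPath.exists_isConformalDecomp_of_inv_not_mem (h : X.IsPath x y γ)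
    (hγ : ∀ e ∈ γ, X.inv e ∉ γ) : ∃ δ L, X.IsConformalDecomp x y (X.pathChain γ) δ L := by
  obtain ⟨δ, L, hδ, hL, hδγ, hLγ, hc⟩ := h.exists_simplePath_simpleLoops
  exact ⟨δ, L, hδ, hL, chainSupp_subset_of_subset hδγ hγ,
    fun σ hσ => chainSupp_subset_of_subset (hLγ σ hσ) hγ, hc⟩

theorem IsPath.exists_isConformalDecomp (h : X.IsPath x y γ) :
    ∃ δ L, X.IsConformalDecomp x y (X.pathChain γ) δ L := by
  induction hn : γ.length using Nat.strong_induction_on generalizing γ x y with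
  | _ n ih =>
  by_cases hγ : ∀ e ∈ γ, X.inv e ∉ γ
  · exact h.exists_isConformalDecomp_of_inv_not_mem hγ
  obtain ⟨f, hf, hf'⟩ : ∃ f ∈ γ, X.inv f ∈ γ := by simpa using hγ
  obtain ⟨g, α, μ, β, rfl⟩ := exists_eq_append_cons_append_inv_cons hf hf'
  obtain ⟨hαβ, hμ⟩ := h.cancel
  have hlen : (α ++ β).length + μ.length + 2 = n := by
    simp only [← hn, List.length_append, List.length_cons]
    omega
  rw [pathChain_cancel]
  by_cases hshare : ∃ w ∈ X.vertices x (α ++ β), w ∈ X.vertices (X.t g) μ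
  · obtain ⟨w, hw, hw'⟩ := hshare
    obtain ⟨ρ, hρ, hρlen, hρc⟩ := hαβ.exists_splice hμ hw hw'
    rw [← hρc]
    exact ih _ (by omega) hρ rfl
  · have hdisj : (X.vertices x (α ++ β)).Disjoint (X.vertices (X.t g) μ) :=
      fun w hw hw' => hshare ⟨w, hw, hw'⟩
    obtain ⟨δ, L, hd⟩ := ih _ (by omega) hαβ rfl
    obtain ⟨δ', L', hd'⟩ := ih _ (by omega) hμ rfl
    obtain rfl := hd'.isSimplePath.eq_nil_of_loop
    refine ⟨δ, L ++ L', hd.add hd' (chainSupp_subset_add_of_disjoint hαβ hμ hdisj) ?_⟩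
    rw [add_comm (X.pathChain _)]
    exact chainSupp_subset_add_of_disjoint hμ hαβ hdisj.symm

end Decomposition

end SunadaGraph

/-- Lemma: decomposition of path chains.  For any path `γ : x → y`
we can write `c_γ = c_δ + c_{σ₁} + ⋯ + c_{σₙ}` where `δ : x → y` is a simple path and
the `σᵢ` are simple loops, all of whose chains have support contained in `supp(c_γ)`. -/
theorem path_chain_decomposition (X : SunadaGraph) (x y : X.V) (γ : List X.E)
    (hγ : X.IsPath x y γ) :
    ∃ (n : ℕ) (δ : List X.E) (v : Fin n → X.V) (σ : Fin n → List X.E),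
      X.IsSimplePath x y δ ∧
      (∀ i, X.IsSimpleLoop (v i) (σ i)) ∧
      X.chainSupp (X.pathChain δ) ⊆ X.chainSupp (X.pathChain γ) ∧
      (∀ i, X.chainSupp (X.pathChain (σ i)) ⊆ X.chainSupp (X.pathChain γ)) ∧
      X.pathChain γ = X.pathChain δ + ∑ i, X.pathChain (σ i) := by
  obtain ⟨δ, L, hd⟩ := hγ.exists_isConformalDecomp
  choose v hv using fun i : Fin L.length => hd.isSimpleLoop _ (L.getElem_mem i.2)
  refine ⟨L.length, δ, v, fun i => L[i.1], hd.isSimplePath, hv, hd.chainSupp_path,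
    fun i => hd.chainSupp_loop _ (L.getElem_mem i.2), ?_⟩
  rw [Fin.sum_univ_fun_getElem]
  exact hd.eq_add
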